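/- For each nonzero u₀ ∈ ℝ^{n+1} there exist a conical open neighbourhood U of u₀ and smooth vector fields X₁,…,Xₙ on U, everywhere tangent to the spheres (i.e. Xᵢ(u) ⟂ u for all u ∈ U), such that: (i) at every point u of the ray ℝ₊u₀, the vectors X₁(u),…,Xₙ(u) are orthonormal; (ii) the directional derivative of Xᵢ along the radial field ξ(u)=u vanishes on U; and (iii) at every u ∈ ℝ₊u₀, the derivative of Xᵢ in the direction Xⱼ(u) equals −δᵢⱼ·u/‖u‖². -/

import Mathlib

open EuclideanSpace

open scoped RealInnerProductSpace

section Aux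

variable {E : Type*} [NormedAddCommGroup E] [InnerProductSpace ℝ E]

private lemma polar_fderiv_apply (e u v : E) (hu : u ≠ 0) :
    fderiv ℝ (fun w => e - ((⟪e, w⟫ * (‖w‖ ^ 2)⁻¹) • w)) u v =
      -((⟪e, u⟫ * (‖u‖ ^ 2)⁻¹) • v +
        (⟪e, u⟫ * (-((‖u‖ ^ 2) ^ 2)⁻¹ * (2 * ⟪u, v⟫)) + (‖u‖ ^ 2)⁻¹ * ⟪e, v⟫) • u) := by
  have hne : ‖u‖ ^ 2 ≠ 0 := pow_ne_zero _ (norm_ne_zero_iff.mpr hu)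
  have h1 : HasFDerivAt (fun w : E => ⟪e, w⟫) (innerSL ℝ e) u := (innerSL ℝ e).hasFDerivAt
  have h2 : HasFDerivAt (fun w : E => ‖w‖ ^ 2) (2 • (innerSL ℝ u)) u := by
    simpa using (hasFDerivAt_id u).norm_sq
  have h3 : HasDerivAt (fun x : ℝ => x⁻¹) (-((‖u‖ ^ 2) ^ 2)⁻¹) (‖u‖ ^ 2) :=
    hasDerivAt_inv hne
  have h4 := h3.comp_hasFDerivAt u h2
  have h5 := h1.mul h4
  have h6 := h5.smul (hasFDerivAt_id u)
  have h7 := (hasFDerivAt_const e u).sub h6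
  simp only [Function.comp_def, id] at h7
  rw [(show HasFDerivAt (fun w : E => e - ((⟪e, w⟫ * (‖w‖ ^ 2)⁻¹) • w)) _ u from h7).fderiv]
  simp

end Aux

/-- Polar frame lemma: for every nonzero `u₀ ∈ ℝ^{n+1}` there are a conical open
neighbourhood `U` of `u₀` and smooth vector fields `X₁,…,Xₙ` on `U`, tangent to the
spheres (`Xᵢ(u) ⟂ u`), which are orthonormal at every point of the ray `ℝ₊u₀`, have
vanishing derivative in the radial direction `ξ(u) = u` on all of `U`, and satisfy
`∂_{Xⱼ} Xᵢ = -δᵢⱼ u/‖u‖²` at every point `u` of the ray. -/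
theorem stmt_17 (n : ℕ) (u₀ : EuclideanSpace ℝ (Fin (n + 1))) (hu₀ : u₀ ≠ 0) :
    ∃ (U : Set (EuclideanSpace ℝ (Fin (n + 1))))
      (X : Fin n → EuclideanSpace ℝ (Fin (n + 1)) → EuclideanSpace ℝ (Fin (n + 1))),
      IsOpen U ∧ u₀ ∈ U ∧
      (∀ u ∈ U, ∀ t : ℝ, 0 < t → t • u ∈ U) ∧
      (∀ i, ContDiffOn ℝ (⊤ : ℕ∞) (X i) U) ∧
      (∀ u ∈ U, ∀ i, inner ℝ (X i u) u = (0 : ℝ)) ∧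
      (∀ t : ℝ, 0 < t → Orthonormal ℝ (fun i => X i (t • u₀))) ∧
      (∀ u ∈ U, ∀ i, fderiv ℝ (X i) u u = 0) ∧
      (∀ t : ℝ, 0 < t → ∀ i j, fderiv ℝ (X i) (t • u₀) (X j (t • u₀)) =
        -(((if i = j then (1 : ℝ) else 0) / ‖t • u₀‖ ^ 2) • (t • u₀))) := by
  classical
  -- orthonormal family orthogonal to u₀
  have hdim : Module.finrank ℝ
      ((ℝ ∙ u₀)ᗮ : Submodule ℝ (EuclideanSpace ℝ (Fin (n + 1)))) = n := by
    have h := Submodule.finrank_add_finrank_orthogonal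
      (K := (ℝ ∙ u₀ : Submodule ℝ (EuclideanSpace ℝ (Fin (n + 1)))))
    rw [finrank_span_singleton hu₀, finrank_euclideanSpace_fin] at h
    omega
  let b : OrthonormalBasis (Fin n) ℝ
      ((ℝ ∙ u₀)ᗮ : Submodule ℝ (EuclideanSpace ℝ (Fin (n + 1)))) :=
    (stdOrthonormalBasis ℝ _).reindex (finCongr hdim)
  let e : Fin n → EuclideanSpace ℝ (Fin (n + 1)) := fun i => (b i : EuclideanSpace ℝ (Fin (n + 1)))
  have he_on : Orthonormal ℝ e := by
    have := b.orthonormal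
    rw [orthonormal_iff_ite] at this ⊢
    intro i j
    simpa [e, Submodule.coe_inner] using this i j
  have he_perp : ∀ i, ⟪e i, u₀⟫ = 0 := by
    intro i
    have hb := (b i).2
    have := (Submodule.mem_orthogonal _ _).1 hb u₀ (Submodule.mem_span_singleton_self u₀)
    rw [real_inner_comm] at this
    exact this
  -- the open cone
  set U : Set (EuclideanSpace ℝ (Fin (n + 1))) := {u | 0 < ⟪u, u₀⟫} with hU
  have hUne : ∀ u ∈ U, u ≠ 0 := by
    rintro u hu rfl
    simp [hU] at hu
  have hUnorm : ∀ u ∈ U, ‖u‖ ^ 2 ≠ 0 := fun u hu =>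
    pow_ne_zero _ (norm_ne_zero_iff.mpr (hUne u hu))
  -- the vector fields
  set X : Fin n → EuclideanSpace ℝ (Fin (n + 1)) → EuclideanSpace ℝ (Fin (n + 1)) :=
    fun i u => e i - ((⟪e i, u⟫ * (‖u‖ ^ 2)⁻¹) • u) with hX
  have hray : ∀ t : ℝ, ∀ i, X i (t • u₀) = e i := by
    intro t i
    rw [hX]
    simp only [real_inner_smul_right, he_perp, mul_zero, zero_mul, zero_smul, sub_zero]
  refine ⟨U, X, ?_, ?_, ?_, ?_, ?_, ?_, ?_, ?_⟩
  · exact isOpen_lt continuous_const (continuous_id.inner continuous_const)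
  · show (0:ℝ) < ⟪u₀, u₀⟫
    rw [real_inner_self_eq_norm_sq]
    exact pow_pos (norm_pos_iff.mpr hu₀) 2
  · intro u hu t ht
    show (0:ℝ) < ⟪t • u, u₀⟫
    rw [real_inner_smul_left]
    exact mul_pos ht hu
  · intro i
    refine ContDiffOn.sub contDiffOn_const (ContDiffOn.smul (ContDiffOn.mul ?_ ?_) contDiffOn_id :
      ContDiffOn ℝ (⊤ : ℕ∞) ((fun u => ⟪e i, u⟫ * (‖u‖ ^ 2)⁻¹) • id) U)
    · exact (contDiff_const.inner ℝ contDiff_id).contDiffOn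
    · exact ((contDiff_norm_sq ℝ).contDiffOn).inv hUnorm
  · intro u hu i
    have h := hUnorm u hu
    show ⟪e i - ((⟪e i, u⟫ * (‖u‖ ^ 2)⁻¹) • u), u⟫ = 0
    rw [inner_sub_left, real_inner_smul_left, real_inner_self_eq_norm_sq]
    field_simp
    rw [div_self (norm_ne_zero_iff.mpr (hUne u hu)), sub_self, mul_zero]
  · intro t ht
    have : (fun i => X i (t • u₀)) = e := funext fun i => hray t i
    rw [this]; exact he_on
  · intro u hu i
    have h := polar_fderiv_apply (e i) u u (hUne u hu)
    have hne := hUnorm u hu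
    rw [hX]
    rw [h, real_inner_self_eq_norm_sq, ← add_smul]
    have hc : ⟪e i, u⟫ * (‖u‖ ^ 2)⁻¹ +
        (⟪e i, u⟫ * (-((‖u‖ ^ 2) ^ 2)⁻¹ * (2 * ‖u‖ ^ 2)) + (‖u‖ ^ 2)⁻¹ * ⟪e i, u⟫) = 0 := by
      field_simp
      ring
    rw [hc, zero_smul, neg_zero]
  · intro t ht i j
    have hune : t • u₀ ≠ 0 := smul_ne_zero ht.ne' hu₀
    have h := polar_fderiv_apply (e i) (t • u₀) (e j) hune
    have hzero : ⟪e i, t • u₀⟫ = 0 := by simp [inner_smul_right, he_perp]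
    have hij : ⟪e i, e j⟫ = if i = j then (1:ℝ) else 0 := by
      have := he_on
      rw [orthonormal_iff_ite] at this
      exact this i j
    rw [hray t j, hX, h, hzero, hij]
    simp [div_eq_mul_inv, mul_comm]
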